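/- arXiv:1210.4715 — 2 statements merged into one kernel-verified Lean document; each statement's English description precedes it below -/
import Mathlib

section
/- Let X be a separable Banach space, Y a Banach space, G ⊂ X open, and f : G → Y a Borel measurable mapping whose restriction to every line meeting G is continuous. Let A be the set of all points x ∈ G at which f is not Lipschitz but for which there exists a second-category subset B_x of the unit sphere S_X such that limsup_{t→0+} ‖f(x+tv)−f(x)‖/t < ∞ for each v ∈ B_x. Then A is σ-directionally porous. -/
open Filter Metric Set Topology MeasureTheory

section CommonDefs
variable {X Y : Type*}

/-- `f` is (pointwise) Lipschitz at `x`: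
`limsup_{y→x} ‖f y - f x‖/‖y - x‖ < ∞`. -/
def LipschitzAtPt [NormedAddCommGroup X] [NormedAddCommGroup Y]
    (f : X → Y) (x : X) : Prop :=
  ∃ K > (0:ℝ), ∃ δ > (0:ℝ), ∀ y ∈ ball x δ, ‖f y - f x‖ ≤ K * ‖y - x‖

/-- The (two-sided) Hadamard directional derivative of `f` at `x` in direction `v` is `y`:
`(f (x + t z) - f x)/t → y` as `z → v`, `t → 0`, `t ≠ 0`. -/
def HadamardDerivAt [NormedAddCommGroup X] [NormedSpace ℝ X]
    [NormedAddCommGroup Y] [NormedSpace ℝ Y]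
    (f : X → Y) (x v : X) (y : Y) : Prop :=
  Tendsto (fun p : ℝ × X => p.1⁻¹ • (f (x + p.1 • p.2) - f x))
    ((𝓝[≠] (0:ℝ)) ×ˢ 𝓝 v) (𝓝 y)

/-- The one-sided Hadamard directional derivative of `f` at `x` in direction `v` is `y`:
`(f (x + t z) - f x)/t → y` as `z → v`, `t → 0+`. -/
def HadamardPlusDerivAt [NormedAddCommGroup X] [NormedSpace ℝ X]
    [NormedAddCommGroup Y] [NormedSpace ℝ Y]
    (f : X → Y) (x v : X) (y : Y) : Prop :=
  Tendsto (fun p : ℝ × X => p.1⁻¹ • (f (x + p.1 • p.2) - f x))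
    ((𝓝[>] (0:ℝ)) ×ˢ 𝓝 v) (𝓝 y)

/-- `f` is Gâteaux differentiable at `x` with derivative the continuous linear map `L`. -/
def GateauxDiffAt [NormedAddCommGroup X] [NormedSpace ℝ X]
    [NormedAddCommGroup Y] [NormedSpace ℝ Y]
    (f : X → Y) (x : X) (L : X →L[ℝ] Y) : Prop :=
  ∀ v : X, Tendsto (fun t : ℝ => t⁻¹ • (f (x + t • v) - f x)) (𝓝[≠] (0:ℝ)) (𝓝 (L v))

/-- `f` is Hadamard differentiable at `x` with derivative the continuous linear map `L`. -/
def HadamardDiffAt [NormedAddCommGroup X] [NormedSpace ℝ X]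
    [NormedAddCommGroup Y] [NormedSpace ℝ Y]
    (f : X → Y) (x : X) (L : X →L[ℝ] Y) : Prop :=
  ∀ v : X, HadamardDerivAt f x v (L v)

/-- `A` is directionally porous at `x`. -/
def DirPorousAt [NormedAddCommGroup X] [NormedSpace ℝ X] (A : Set X) (x : X) : Prop :=
  ∃ v : X, v ≠ 0 ∧ ∃ p > (0:ℝ), ∃ t : ℕ → ℝ, (∀ n, 0 < t n) ∧
    Tendsto t atTop (𝓝 (0:ℝ)) ∧ ∀ n, ball (x + t n • v) (p * t n) ∩ A = ∅

/-- `A` is a countable union of directionally porous sets. -/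
def SigmaDirPorous [NormedAddCommGroup X] [NormedSpace ℝ X] (A : Set X) : Prop :=
  ∃ S : ℕ → Set X, A = ⋃ n, S n ∧ ∀ n, ∀ x ∈ S n, DirPorousAt (S n) x

/-- `A` is porous at `x`. -/
def PorousAt [NormedAddCommGroup X] (A : Set X) (x : X) : Prop :=
  ∃ p > (0:ℝ), ∃ y : ℕ → X, (∀ n, y n ≠ x) ∧ Tendsto y atTop (𝓝 x) ∧
    ∀ n, ball (y n) (p * ‖y n - x‖) ∩ A = ∅

/-- `A` is a countable union of porous sets. -/
def SigmaPorous [NormedAddCommGroup X] (A : Set X) : Prop :=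
  ∃ S : ℕ → Set X, A = ⋃ n, S n ∧ ∀ n, ∀ x ∈ S n, PorousAt (S n) x

end CommonDefs

open scoped Pointwise

/-!
Fix a bound `K`, a radius `ρ`, an aperture `q` and a direction `w` from a countable dense subset
of the sphere, and put `x` in the piece for these parameters when `‖f z - f x‖ ≤ K ‖z - x‖` for
comeagre many `z` in the sector `x + (0, ρ) • B(w, q)`. Countably many pieces cover `A`: the
directions along which `f` has a one-sided bound form a non-meagre set, which by continuity on lines
is Borel, hence comeagre in some ball of directions.

If the sectors of two points `x`, `u` of a piece meet, the Baire theorem in `X` gives a point `z`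
good for both, so `f` is Lipschitz on the piece at small scales. If `f` is not Lipschitz at `x`,
take `b` near `x` with `‖f b - f x‖` large; by continuity on lines, `f` stays far from `f x` at
comeagre many points of some sector at `b`. A point `u` of the piece near `x - τ w` has a sector
meeting that one, which produces a `z` with `f z` both far from `f x` and close to `f u`, hence to
`f x`. So the piece misses a ball around `x - τ w` of radius proportional to `τ`, for arbitrarily
small `τ`.
-/

section Baire
variable {Z : Type*} [TopologicalSpace Z]

theorem BaireMeasurableSet.exists_isOpen_isMeagre_diff {E : Set Z} (hE : BaireMeasurableSet E)
    (h : ¬ IsMeagre E) : ∃ U : Set Z, IsOpen U ∧ U.Nonempty ∧ IsMeagre (U \ E) := by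
  obtain ⟨U, hU, hEU⟩ := hE.residualEq_isOpen
  have hsymm : IsMeagre (symmDiff E U) := by
    rw [IsMeagre]
    filter_upwards [hEU] with z hz
    simpa using (Iff.of_eq hz : z ∈ E ↔ z ∈ U)
  refine ⟨U, hU, ?_, hsymm.mono fun z hz => Or.inr hz⟩
  rw [Set.nonempty_iff_ne_empty]
  rintro rfl
  exact h (hsymm.mono fun z hz => Or.inl ⟨hz, id⟩)

theorem exists_mem_inter_of_isMeagre_diff [BaireSpace Z] {U V A B : Set Z} (hU : IsOpen U)
    (hV : IsOpen V) (hUV : (U ∩ V).Nonempty) (hA : IsMeagre (U \ A)) (hB : IsMeagre (V \ B)) :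
    ∃ z ∈ U ∩ V, z ∈ A ∧ z ∈ B := by
  by_contra! h
  refine not_isMeagre_of_isOpen (hU.inter hV) hUV ((hA.union hB).mono ?_)
  rintro z ⟨hzU, hzV⟩
  by_cases hzA : z ∈ A
  · exact Or.inr ⟨hzV, h z ⟨hzU, hzV⟩ hzA⟩
  · exact Or.inl ⟨hzU, hzA⟩

end Baire

instance completeSpace_sphere {X : Type*} [NormedAddCommGroup X] [CompleteSpace X] (x : X)
    (r : ℝ) :
    CompleteSpace (sphere x r) :=
  isClosed_sphere.completeSpace_coe

theorem Dense.exists_mem_ball_subset {M : Type*} [PseudoMetricSpace M] {s U : Set M}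
    (hs : Dense s) (hU : IsOpen U) (hne : U.Nonempty) :
    ∃ w ∈ s, ∃ k : ℕ, ball w (1 / (k + 1)) ⊆ U := by
  obtain ⟨u, hu⟩ := hne
  obtain ⟨ε, hε, hball⟩ := Metric.isOpen_iff.mp hU u hu
  obtain ⟨k, hk⟩ := exists_nat_one_div_lt (half_pos hε)
  obtain ⟨w, hw, hwu⟩ := hs.exists_dist_lt u (half_pos hε)
  exact ⟨w, hw, k, (ball_subset_ball' (by rw [dist_comm]; linarith)).trans hball⟩

section DirPorous
variable {X : Type*} [NormedAddCommGroup X] [NormedSpace ℝ X]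

theorem DirPorousAt.mono {A B : Set X} {x : X} (h : DirPorousAt A x) (hBA : B ⊆ A) :
    DirPorousAt B x := by
  obtain ⟨v, hv, p, hp, t, ht, htend, hhole⟩ := h
  exact ⟨v, hv, p, hp, t, ht, htend, fun n => subset_eq_empty (inter_subset_inter_right _ hBA)
    (hhole n)⟩

theorem dirPorousAt_of_forall_exists_hole {A : Set X} {x v : X} (hv : v ≠ 0) {p : ℝ}
    (hp : 0 < p) (h : ∀ ε > 0, ∃ τ ∈ Ioo 0 ε, ball (x + τ • v) (p * τ) ∩ A = ∅) :
    DirPorousAt A x := by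
  choose τ hτ hhole using fun n : ℕ => h (1 / (n + 1)) Nat.one_div_pos_of_nat
  exact ⟨v, hv, p, hp, τ, fun n => (hτ n).1, squeeze_zero (fun n => (hτ n).1.le)
    (fun n => (hτ n).2.le) tendsto_one_div_add_atTop_nhds_zero_nat, hhole⟩

theorem sigmaDirPorous_of_subset_iUnion {ι : Type*} [Countable ι] {A : Set X} (S : ι → Set X)
    (hA : A ⊆ ⋃ i, S i) (hS : ∀ i, ∀ x ∈ S i ∩ A, DirPorousAt (S i) x) : SigmaDirPorous A := by
  have hA' : A = ⋃ i, S i ∩ A := by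
    rw [← iUnion_inter, inter_eq_right.2 hA]
  rcases isEmpty_or_nonempty ι with hι | hι
  · exact ⟨fun _ => ∅, by simpa using hA', fun _ _ hx => absurd hx (notMem_empty _)⟩
  obtain ⟨e, he⟩ := exists_surjective_nat ι
  exact ⟨fun n => S (e n) ∩ A, by rw [he.iUnion_comp (fun i => S i ∩ A)]; exact hA',
    fun n x hx => (hS (e n) x hx).mono inter_subset_left⟩

end DirPorous

section Sector
variable {X : Type*} [NormedAddCommGroup X] [NormedSpace ℝ X]

def sector (C : Set (sphere (0:X) 1)) (r : ℝ) : Set X :=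
  Ioo (0:ℝ) r • (Subtype.val '' C)

theorem smul_mem_sector {C : Set (sphere (0:X) 1)} {r s : ℝ} {v : sphere (0:X) 1} (hv : v ∈ C)
    (hs : s ∈ Ioo 0 r) : s • (v : X) ∈ sector C r :=
  Set.smul_mem_smul hs (mem_image_of_mem _ hv)

theorem norm_lt_of_mem_sector {C : Set (sphere (0:X) 1)} {r : ℝ} {y : X} (hy : y ∈ sector C r) :
    ‖y‖ < r := by
  obtain ⟨s, hs, _, ⟨v, -, rfl⟩, rfl⟩ := hy
  rw [norm_smul, norm_eq_of_mem_sphere v, mul_one, Real.norm_of_nonneg hs.1.le]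
  exact hs.2

theorem IsOpen.sector {C : Set (sphere (0:X) 1)} (hC : IsOpen C) (r : ℝ) :
    IsOpen (sector C r) :=
  isOpen_Ioo.smul_sphere one_ne_zero (fun h => lt_irrefl _ h.1) hC

theorem sector_mono {C D : Set (sphere (0:X) 1)} {r r' : ℝ} (hCD : C ⊆ D) (hr : r ≤ r') :
    sector C r ⊆ sector D r' :=
  Set.smul_subset_smul (Ioo_subset_Ioo_right hr) (image_mono hCD)

theorem IsMeagre.sector {C : Set (sphere (0:X) 1)} (hC : IsMeagre C) (r : ℝ) :
    IsMeagre (sector C r) := by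
  have hpolar : IsMeagre (Subtype.val ''
      ((homeomorphUnitSphereProd X).symm '' (Prod.fst ⁻¹' C)) : Set X) :=
    IsMeagre.image_val <| (homeomorphUnitSphereProd X).symm.isInducing.isMeagre_image <|
      hC.preimage_of_isOpenMap continuous_fst isOpenMap_fst
  refine hpolar.mono ?_
  rintro _ ⟨s, hs, _, ⟨v, hv, rfl⟩, rfl⟩
  exact ⟨_, ⟨(v, ⟨s, hs.1⟩), hv, rfl⟩, homeomorphUnitSphereProd_symm_apply_coe _ _⟩

theorem isMeagre_preimage_sector_diff {C D : Set (sphere (0:X) 1)} {L : ℝ} (b : X) {P : Set X}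
    (hCD : IsMeagre (C \ D)) (hDP : ∀ v ∈ D, ∀ t ∈ Ioo 0 L, b + t • (v : X) ∈ P) :
    IsMeagre ((· - b) ⁻¹' sector C L \ P) := by
  refine ((hCD.sector L).preimage_of_isOpenMap (continuous_sub_right b)
    (isOpenMap_sub_right b)).mono ?_
  rintro z ⟨hzC, hzP⟩
  obtain ⟨t, ht, _, ⟨v, hvC, rfl⟩, hz⟩ : z - b ∈ sector C L := hzC
  rw [mem_preimage, ← hz]
  refine smul_mem_sector ⟨hvC, fun hvD => hzP ?_⟩ ht
  simpa [hz] using hDP v hvD t ht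

theorem mem_sector_ball_of_norm_sub_smul_lt (w : sphere (0:X) 1) {q s : ℝ} {y : X} (hs : 0 < s)
    (hq : q ≤ 2) (hy : ‖y - s • (w : X)‖ < q * s / 2) : y ∈ sector (ball w q) (2 * s) := by
  have hsw : ‖s • (w : X)‖ = s := by
    rw [norm_smul, norm_eq_of_mem_sphere w, mul_one, Real.norm_of_nonneg hs.le]
  have hny : |‖y‖ - s| ≤ ‖y - s • (w : X)‖ := by
    simpa only [hsw] using abs_norm_sub_norm_le y (s • (w : X))
  have hqs : q * s ≤ 2 * s := mul_le_mul_of_nonneg_right hq hs.le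
  have hny' := abs_lt.mp (hny.trans_lt hy)
  have hy0 : 0 < ‖y‖ := by linarith
  set e : sphere (0:X) 1 := ⟨‖y‖⁻¹ • y, by
    rw [mem_sphere_zero_iff_norm, norm_smul, norm_inv, norm_norm, inv_mul_cancel₀ hy0.ne']⟩
  have he : dist e w < q := by
    rw [Subtype.dist_eq, dist_eq_norm]
    have hsplit : s • ((e : X) - w) = (s * ‖y‖⁻¹ - 1) • y + (y - s • (w : X)) := by
      simp only [e, smul_sub, sub_smul, smul_smul, one_smul]; abel
    have hfirst : ‖(s * ‖y‖⁻¹ - 1) • y‖ = |‖y‖ - s| := by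
      rw [norm_smul, Real.norm_eq_abs, ← abs_norm y, ← abs_mul, sub_mul, mul_assoc,
        abs_norm, inv_mul_cancel₀ hy0.ne', mul_one, one_mul, abs_sub_comm]
    have : s * ‖(e : X) - w‖ < s * q := by
      calc s * ‖(e : X) - w‖ = ‖s • ((e : X) - w)‖ := by
            rw [norm_smul, Real.norm_of_nonneg hs.le]
        _ ≤ |‖y‖ - s| + ‖y - s • (w : X)‖ := by rw [hsplit, ← hfirst]; exact norm_add_le _ _
        _ < s * q := by linarith
    exact lt_of_mul_lt_mul_left this hs.le
  have hyr : ‖y‖ < 2 * s := by linarith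
  have : ‖y‖ • (e : X) = y := by
    simp only [e, smul_smul, mul_inv_cancel₀ hy0.ne', one_smul]
  exact this ▸ smul_mem_sector he ⟨hy0, hyr⟩

end Sector

section Rays
variable {X Y : Type*} [NormedAddCommGroup X] [NormedSpace ℝ X] [NormedAddCommGroup Y]

def ContinuousOnLines (f : X → Y) (G : Set X) : Prop :=
  ∀ a v : X, v ≠ 0 → ContinuousOn (fun t : ℝ => f (a + t • v)) {t : ℝ | a + t • v ∈ G}

theorem ContinuousOnLines.continuousAt {f : X → Y} {G : Set X} (hf : ContinuousOnLines f G)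
    (hG : IsOpen G) {a v : X} (hv : v ≠ 0) {t : ℝ} (ht : a + t • v ∈ G) :
    ContinuousAt (fun t : ℝ => f (a + t • v)) t :=
  (hf a v hv).continuousAt <|
    (hG.preimage (continuous_const.add (continuous_id.smul continuous_const))).mem_nhds ht

theorem add_smul_mem_ball (b : X) (v : sphere (0:X) 1) {t L : ℝ} (ht : t ∈ Ioo 0 L) :
    b + t • (v : X) ∈ ball b L := by
  rw [mem_ball_iff_norm, add_sub_cancel_left, norm_smul, norm_eq_of_mem_sphere v, mul_one,
    Real.norm_of_nonneg ht.1.le]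
  exact ht.2

variable [MeasurableSpace X] [BorelSpace X] [MeasurableSpace Y] [BorelSpace Y]

/-- Continuity along rays reduces the condition to rational times, each of which is measurable. -/
theorem ContinuousOnLines.measurableSet_forall_Ioo {f : X → Y} {G : Set X}
    (hf : ContinuousOnLines f G) (hG : IsOpen G) (hmeas : Measurable f) {b : X} {L : ℝ}
    (hb : ball b L ⊆ G) {F : Set (ℝ × Y)} (hF : IsClosed F) :
    MeasurableSet {v : sphere (0:X) 1 | ∀ t ∈ Ioo 0 L, (t, f (b + t • (v : X))) ∈ F} := by
  have hrat : {v : sphere (0:X) 1 | ∀ t ∈ Ioo 0 L, (t, f (b + t • (v : X))) ∈ F} =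
      ⋂ (q : ℚ) (_ : (q : ℝ) ∈ Ioo 0 L),
        {v : sphere (0:X) 1 | ((q : ℝ), f (b + (q : ℝ) • (v : X))) ∈ F} := by
    ext v
    simp only [mem_ofPred_eq, mem_iInter]
    refine ⟨fun h q hq => h q hq, fun h t ht => ?_⟩
    have hcont : ContinuousAt (fun t : ℝ => (t, f (b + t • (v : X)))) t :=
      continuousAt_id.prodMk <|
        hf.continuousAt hG (ne_zero_of_mem_unit_sphere v) (hb (add_smul_mem_ball b v ht))
    have hclosure := hcont.continuousWithinAt.mem_closure_image
      (Rat.denseRange_cast.open_subset_closure_inter isOpen_Ioo ht)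
    refine hF.closure_subset_iff.mpr ?_ hclosure
    rintro _ ⟨_, ⟨hq, q, rfl⟩, rfl⟩
    exact h q hq
  rw [hrat]
  refine MeasurableSet.iInter fun q => MeasurableSet.iInter fun _ => hF.measurableSet.preimage ?_
  exact measurable_const.prodMk <| hmeas.comp <|
    (continuous_const.add (continuous_subtype_val.const_smul _)).measurable

variable [CompleteSpace X]

/-- By the Baire theorem on the sphere, the directions along which `f` stays in `F` on a segment
of some uniform length form a non-meagre, hence locally comeagre, set. -/
theorem ContinuousOnLines.exists_isMeagre_sector_diff {f : X → Y} {G : Set X}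
    (hf : ContinuousOnLines f G) (hG : IsOpen G) (hmeas : Measurable f)
    [Nonempty (sphere (0:X) 1)] {b : X} {r : ℝ} (hr : 0 < r) (hb : ball b r ⊆ G) {F : Set Y}
    (hF : IsClosed F) (hbF : F ∈ 𝓝 (f b)) :
    ∃ L > 0, ∃ W : Set (sphere (0:X) 1), IsOpen W ∧ W.Nonempty ∧
      IsMeagre ((· - b) ⁻¹' sector W L \ f ⁻¹' F) := by
  set V : ℕ → Set (sphere (0:X) 1) := fun n =>
    {v | ∀ t ∈ Ioo 0 (min r (1 / (n + 1))), (t, f (b + t • (v : X))) ∈ (univ ×ˢ F : Set (ℝ × Y))}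
  have hcover : ∀ v, ∃ n, v ∈ V n := by
    intro v
    have hnear : ∀ᶠ t in 𝓝 (0:ℝ), f (b + t • (v : X)) ∈ F := by
      refine (hf.continuousAt hG (ne_zero_of_mem_unit_sphere v) ?_).eventually_mem ?_
      · simpa using hb (mem_ball_self hr)
      · simpa using hbF
    obtain ⟨ε, hε, hεF⟩ := Metric.eventually_nhds_iff.mp hnear
    obtain ⟨n, hn⟩ := exists_nat_one_div_lt hε
    refine ⟨n, fun t ht => ⟨trivial, hεF ?_⟩⟩
    rw [Real.dist_0_eq_abs, abs_of_pos ht.1]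
    exact ht.2.trans_le (min_le_right _ _) |>.trans hn
  obtain ⟨n, hn⟩ : ∃ n, ¬ IsMeagre (V n) := by
    by_contra! h
    exact not_isMeagre_of_isOpen isOpen_univ univ_nonempty
      ((isMeagre_iUnion h).mono fun v _ => mem_iUnion.2 (hcover v))
  have hmeasV : MeasurableSet (V n) :=
    hf.measurableSet_forall_Ioo hG hmeas ((ball_subset_ball (min_le_left _ _)).trans hb)
      (isClosed_univ.prod hF)
  obtain ⟨W, hW, hWne, hWV⟩ := hmeasV.baireMeasurableSet.exists_isOpen_isMeagre_diff hn
  exact ⟨min r (1 / (n + 1)), lt_min hr Nat.one_div_pos_of_nat, W, hW, hWne,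
    isMeagre_preimage_sector_diff b hWV fun v hv t ht => (hv t ht).2⟩

end Rays

section ConePiece
variable {X Y : Type*} [NormedAddCommGroup X] [NormedSpace ℝ X] [NormedAddCommGroup Y]
  {f : X → Y} {G : Set X} {K ρ q : ℝ} {w : sphere (0:X) 1}

def rayBoundSet (f : X → Y) (x : X) (K ρ : ℝ) : Set (sphere (0:X) 1) :=
  {v | ∀ t ∈ Ioo 0 ρ, ‖f (x + t • (v : X)) - f x‖ ≤ K * t}

def conePiece (f : X → Y) (G : Set X) (K ρ q : ℝ) (w : sphere (0:X) 1) : Set X :=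
  {x | closedBall x (2 * ρ) ⊆ G ∧
    IsMeagre ((· - x) ⁻¹' sector (ball w q) ρ \ {z | ‖f z - f x‖ ≤ K * ‖z - x‖})}

theorem mem_conePiece_of_isMeagre {x : X} (hG : closedBall x (2 * ρ) ⊆ G)
    (h : IsMeagre (ball w q \ rayBoundSet f x K ρ)) : x ∈ conePiece f G K ρ q w := by
  refine ⟨hG, isMeagre_preimage_sector_diff x h fun v hv t ht => ?_⟩
  simpa [norm_smul, norm_eq_of_mem_sphere v, abs_of_pos ht.1] using hv t ht

variable [CompleteSpace X]

theorem norm_sub_le_of_mem_conePiece (hK : 0 ≤ K) {x u : X} (hx : x ∈ conePiece f G K ρ q w)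
    (hu : u ∈ conePiece f G K ρ q w) {r : ℝ} (hr : r ≤ ρ) {z : X}
    (hzx : z - x ∈ sector (ball w q) r) (hzu : z - u ∈ sector (ball w q) r) :
    ‖f u - f x‖ ≤ 2 * K * r := by
  have hopen : ∀ y : X, IsOpen ((· - y) ⁻¹' sector (ball w q) r) := fun y =>
    (isOpen_ball.sector r).preimage (continuous_sub_right y)
  have hmeagre : ∀ y ∈ conePiece f G K ρ q w,
      IsMeagre ((· - y) ⁻¹' sector (ball w q) r \ {z | ‖f z - f y‖ ≤ K * ‖z - y‖}) :=
    fun y hy => hy.2.mono (sdiff_subset_sdiff_left (preimage_mono (sector_mono subset_rfl hr)))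
  obtain ⟨z', ⟨hzx', hzu'⟩, hx', hu'⟩ := exists_mem_inter_of_isMeagre_diff (hopen x) (hopen u)
    ⟨z, hzx, hzu⟩ (hmeagre x hx) (hmeagre u hu)
  have hbound : ∀ y, z' - y ∈ sector (ball w q) r → ‖f z' - f y‖ ≤ K * ‖z' - y‖ →
      ‖f z' - f y‖ ≤ K * r := fun y hy hK' =>
    hK'.trans (mul_le_mul_of_nonneg_left (norm_lt_of_mem_sector hy).le hK)
  calc ‖f u - f x‖ ≤ ‖f z' - f u‖ + ‖f z' - f x‖ := by
        rw [norm_sub_rev (f z')]; exact norm_sub_le_norm_sub_add_norm_sub _ _ _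
    _ ≤ K * r + K * r := add_le_add (hbound u hzu' hu') (hbound x hzx' hx')
    _ = 2 * K * r := by ring

theorem norm_sub_le_of_mem_conePiece_of_norm_le (hK : 0 ≤ K) (hq : 0 < q) (hq2 : q ≤ 2)
    {x u : X} (hx : x ∈ conePiece f G K ρ q w) (hu : u ∈ conePiece f G K ρ q w)
    (hux : 8 * ‖u - x‖ ≤ q * ρ) : ‖f u - f x‖ ≤ 16 * K / q * ‖u - x‖ := by
  rcases eq_or_ne u x with rfl | hne
  · simp
  have hd : 0 < ‖u - x‖ := norm_pos_iff.2 (sub_ne_zero.2 hne)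
  set s := 4 * ‖u - x‖ / q
  have hs : 0 < s := by positivity
  have hxs : x + s • (w : X) - x ∈ sector (ball w q) (2 * s) := by
    rw [add_sub_cancel_left]
    exact smul_mem_sector (mem_ball_self hq) ⟨hs, by linarith⟩
  have hus : x + s • (w : X) - u ∈ sector (ball w q) (2 * s) := by
    refine mem_sector_ball_of_norm_sub_smul_lt w hs hq2 ?_
    rw [show x + s • (w : X) - u - s • (w : X) = -(u - x) by abel, norm_neg]
    have : q * s / 2 = 2 * ‖u - x‖ := by simp only [s]; field_simp; ring
    linarith
  have h2s : 2 * s ≤ ρ := by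
    rw [show 2 * s = 8 * ‖u - x‖ / q by ring, div_le_iff₀ hq]; linarith
  calc ‖f u - f x‖ ≤ 2 * K * (2 * s) := norm_sub_le_of_mem_conePiece hK hx hu h2s hxs hus
    _ = 16 * K / q * ‖u - x‖ := by ring

theorem exists_mem_near_of_mem_conePiece (hK : 0 ≤ K) (hq : q ≤ 2) {u : X}
    (hu : u ∈ conePiece f G K ρ q w) {τ : ℝ} (hτ : 0 < τ) (hτρ : 2 * τ ≤ ρ) {b : X}
    (hb : ‖b - u - τ • (w : X)‖ < q * τ / 4) {L : ℝ} (hL : 0 < L) {W : Set (sphere (0:X) 1)}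
    (hW : IsOpen W) (hWne : W.Nonempty) {F : Set Y}
    (hWF : IsMeagre ((· - b) ⁻¹' sector W L \ f ⁻¹' F)) :
    ∃ z, f z ∈ F ∧ ‖f z - f u‖ ≤ 2 * K * τ := by
  obtain ⟨v, hv⟩ := hWne
  set σ := min (L / 2) (q * τ / 4)
  have hσ : 0 < σ := lt_min (half_pos hL) ((norm_nonneg _).trans_lt hb)
  have hσv : ‖σ • (v : X)‖ = σ := by
    rw [norm_smul, norm_eq_of_mem_sphere v, mul_one, Real.norm_of_nonneg hσ.le]
  have hzb : b + σ • (v : X) - b ∈ sector W L := by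
    rw [add_sub_cancel_left]
    exact smul_mem_sector hv ⟨hσ, (min_le_left _ _).trans_lt (half_lt_self hL)⟩
  have hzu : b + σ • (v : X) - u ∈ sector (ball w q) (2 * τ) := by
    refine mem_sector_ball_of_norm_sub_smul_lt w hτ hq ?_
    rw [show b + σ • (v : X) - u - τ • (w : X) = (b - u - τ • (w : X)) + σ • (v : X) by abel]
    calc _ ≤ ‖b - u - τ • (w : X)‖ + ‖σ • (v : X)‖ := norm_add_le _ _
      _ < q * τ / 4 + q * τ / 4 := by rw [hσv]; linarith [min_le_right (L / 2) (q * τ / 4)]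
      _ = q * τ / 2 := by ring
  obtain ⟨z, ⟨-, hzu'⟩, hzF, hzK⟩ := exists_mem_inter_of_isMeagre_diff
    ((hW.sector L).preimage (continuous_sub_right b))
    ((isOpen_ball.sector _).preimage (continuous_sub_right u)) ⟨_, hzb, hzu⟩ hWF
    (hu.2.mono (sdiff_subset_sdiff_left (preimage_mono (sector_mono subset_rfl hτρ))))
  refine ⟨z, hzF, hzK.trans ?_⟩
  calc K * ‖z - u‖ ≤ K * (2 * τ) := mul_le_mul_of_nonneg_left (norm_lt_of_mem_sector hzu').le hK
    _ = 2 * K * τ := by ring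

end ConePiece

section Covering
variable {X Y : Type*} [NormedAddCommGroup X] [NormedSpace ℝ X] [NormedAddCommGroup Y]
  [MeasurableSpace X] [BorelSpace X] [MeasurableSpace Y] [BorelSpace Y]
  {f : X → Y} {G : Set X}

theorem exists_mem_conePiece (hf : ContinuousOnLines f G) (hG : IsOpen G) (hmeas : Measurable f)
    {s : Set (sphere (0:X) 1)} (hs : Dense s) {x : X} (hx : x ∈ G) {B : Set X}
    (hB : ¬ IsMeagre {v : sphere (0:X) 1 | (v : X) ∈ B})
    (hBbound : ∀ v ∈ B, ∃ K : ℝ, ∃ r > (0:ℝ), ∀ t : ℝ, 0 < t → t < r →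
      ‖f (x + t • v) - f x‖ ≤ K * t) :
    ∃ n : ℕ, ∃ w ∈ s, ∃ k : ℕ, x ∈ conePiece f G (n + 1) (1 / (n + 1)) (1 / (k + 1)) w := by
  set D : ℕ → Set (sphere (0:X) 1) := fun n => rayBoundSet f x (n + 1) (1 / (n + 1))
  have hsmall : Tendsto (fun n : ℕ => 1 / ((n : ℝ) + 1)) atTop (𝓝 0) :=
    tendsto_one_div_add_atTop_nhds_zero_nat
  set N := {n : ℕ | closedBall x (2 * (1 / (n + 1))) ⊆ G}
  have hN : ∀ᶠ n in atTop, n ∈ N := by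
    obtain ⟨ε, hε, hεG⟩ := Metric.nhds_basis_closedBall.mem_iff.1 (hG.mem_nhds hx)
    have h2 : Tendsto (fun n : ℕ => 2 * (1 / ((n : ℝ) + 1))) atTop (𝓝 0) := by
      simpa using hsmall.const_mul 2
    filter_upwards [h2.eventually (gt_mem_nhds hε)] with n hn
    exact (closedBall_subset_closedBall hn.le).trans hεG
  have hD : ∀ v : sphere (0:X) 1, (v : X) ∈ B → ∀ᶠ n in atTop, v ∈ D n := by
    intro v hv
    obtain ⟨Kv, rv, hrv, hbound⟩ := hBbound v hv
    filter_upwards [tendsto_natCast_atTop_atTop.eventually_ge_atTop Kv,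
      hsmall.eventually (gt_mem_nhds hrv)] with n hKn hrn t ht
    calc ‖f (x + t • (v : X)) - f x‖ ≤ Kv * t := hbound t ht.1 (ht.2.trans hrn)
      _ ≤ (n + 1) * t := mul_le_mul_of_nonneg_right (by linarith) ht.1.le
  obtain ⟨n, hnG, hn⟩ : ∃ n ∈ N, ¬ IsMeagre (D n) := by
    refine exists_of_not_isMeagre_biUnion N.to_countable fun h => hB (h.mono fun v hv => ?_)
    obtain ⟨n, hvn, hnN⟩ := ((hD v hv).and hN).exists
    exact mem_biUnion hnN hvn
  have hball : ball x (1 / (n + 1)) ⊆ G :=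
    ball_subset_closedBall.trans <| (closedBall_subset_closedBall (by
      linarith [(Nat.one_div_pos_of_nat : (0:ℝ) < 1 / (n + 1))])).trans hnG
  have hmeasD : MeasurableSet (D n) := hf.measurableSet_forall_Ioo hG hmeas hball
    (F := {p | ‖p.2 - f x‖ ≤ (n + 1) * p.1})
    (isClosed_le (continuous_snd.sub continuous_const).norm (continuous_const.mul continuous_fst))
  obtain ⟨U, hU, hUne, hUD⟩ := hmeasD.baireMeasurableSet.exists_isOpen_isMeagre_diff hn
  obtain ⟨w, hw, k, hwU⟩ := hs.exists_mem_ball_subset hU hUne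
  exact ⟨n, w, hw, k, mem_conePiece_of_isMeagre hnG (hUD.mono (sdiff_subset_sdiff_left hwU))⟩

end Covering

theorem exists_jump_of_not_lipschitzAtPt {X Y : Type*} [NormedAddCommGroup X]
    [NormedAddCommGroup Y] {f : X → Y} {x : X} (h : ¬ LipschitzAtPt f x) {C p τ₀ : ℝ}
    (hC : 0 < C) (hp : 0 < p) (hτ₀ : 0 < τ₀) :
    ∃ b, ∃ τ ∈ Ioc 0 τ₀, ‖b - x‖ < p * τ ∧ C * τ ≤ ‖f b - f x‖ := by
  obtain ⟨b, hbx, hbJ⟩ : ∃ b, ‖b - x‖ < p * τ₀ ∧ C / p * ‖b - x‖ < ‖f b - f x‖ := by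
    by_contra! hle
    exact h ⟨C / p, by positivity, p * τ₀, by positivity,
      fun y hy => hle y (mem_ball_iff_norm.1 hy)⟩
  have hJ : 0 < ‖f b - f x‖ := lt_of_le_of_lt (by positivity) hbJ
  refine ⟨b, min (‖f b - f x‖ / C) τ₀, ⟨by positivity, min_le_right _ _⟩, ?_, ?_⟩
  · rw [mul_min_of_nonneg _ _ hp.le]
    refine lt_min ?_ hbx
    rw [show p * (‖f b - f x‖ / C) = ‖f b - f x‖ / (C / p) by field_simp,
      lt_div_iff₀ (by positivity)]
    linarith
  · calc C * min (‖f b - f x‖ / C) τ₀ ≤ C * (‖f b - f x‖ / C) :=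
          mul_le_mul_of_nonneg_left (min_le_left _ _) hC.le
      _ = ‖f b - f x‖ := by field_simp

section Porosity
variable {X Y : Type*} [NormedAddCommGroup X] [NormedSpace ℝ X] [NormedAddCommGroup Y]
  [CompleteSpace X] [MeasurableSpace X] [BorelSpace X] [MeasurableSpace Y] [BorelSpace Y]
  {f : X → Y} {G : Set X}

/-- A point `u` of the piece near `x - τ w` would see, through comeagre sectors, both `x` and a
point near `b`, where `b` is close to `x` but `‖f b - f x‖` is large compared with `τ`. -/
theorem exists_hole_of_mem_conePiece (hf : ContinuousOnLines f G) (hG : IsOpen G)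
    (hmeas : Measurable f) {K ρ q : ℝ} (hK : 0 < K) (hρ : 0 < ρ) (hq : 0 < q) (hq1 : q ≤ 1)
    {w : sphere (0:X) 1} {x : X} (hx : x ∈ conePiece f G K ρ q w) (hnl : ¬ LipschitzAtPt f x)
    {ε : ℝ} (hε : 0 < ε) :
    ∃ τ ∈ Ioo 0 ε, ball (x + τ • -(w : X)) (q / 8 * τ) ∩ conePiece f G K ρ q w = ∅ := by
  have : Nonempty (sphere (0:X) 1) := ⟨w⟩
  set C := (2 + 32 / q) * K
  obtain ⟨b, τ, ⟨hτ, hττ₀⟩, hbx, hJ⟩ := exists_jump_of_not_lipschitzAtPt hnl (C := 4 * C)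
    (p := q / 8) (τ₀ := min (q * ρ / 16) (ε / 2)) (by positivity) (by positivity) (by positivity)
  set J := ‖f b - f x‖
  have hCτ : 0 < C * τ := by positivity
  have hτρ : 16 * τ ≤ q * ρ := by linarith [hττ₀.trans (min_le_left _ _)]
  have hτε : τ < ε := by linarith [hττ₀.trans (min_le_right _ _)]
  have hFb : {y | J / 2 ≤ ‖y - f x‖} ∈ 𝓝 (f b) :=
    mem_of_superset ((isOpen_lt continuous_const (continuous_sub_right _).norm).mem_nhds
      (show J / 2 < ‖f b - f x‖ by linarith)) fun _ hy => le_of_lt (α := ℝ) hy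
  have hbG : ball b ρ ⊆ G := (ball_subset_ball' (by rw [dist_eq_norm]; nlinarith)).trans
    (ball_subset_closedBall.trans hx.1)
  obtain ⟨L, hL, W, hW, hWne, hWF⟩ := hf.exists_isMeagre_sector_diff hG hmeas hρ hbG
    (isClosed_le continuous_const (continuous_sub_right _).norm) hFb
  refine ⟨τ, ⟨hτ, hτε⟩, eq_empty_iff_forall_notMem.2 fun u ⟨huτ, hu⟩ => ?_⟩
  rw [mem_ball_iff_norm] at huτ
  have hτw : ‖τ • -(w : X)‖ = τ := by
    rw [norm_smul, norm_neg, norm_eq_of_mem_sphere w, mul_one, Real.norm_of_nonneg hτ.le]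
  have hux : ‖u - x‖ ≤ 2 * τ := by
    calc ‖u - x‖ = ‖(u - (x + τ • -(w : X))) + τ • -(w : X)‖ := by congr 1; abel
      _ ≤ ‖u - (x + τ • -(w : X))‖ + ‖τ • -(w : X)‖ := norm_add_le _ _
      _ ≤ 2 * τ := by nlinarith
  have hbu : ‖b - u - τ • (w : X)‖ < q * τ / 4 := by
    rw [show b - u - τ • (w : X) = (b - x) - (u - (x + τ • -(w : X))) by
      simp only [smul_neg]; abel]
    calc _ ≤ ‖b - x‖ + ‖u - (x + τ • -(w : X))‖ := norm_sub_le _ _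
      _ < q * τ / 4 := by linarith
  obtain ⟨z, hzF, hzu⟩ := exists_mem_near_of_mem_conePiece hK.le (by linarith) hu hτ
    (by nlinarith) hbu hL hW hWne hWF
  have hfu := norm_sub_le_of_mem_conePiece_of_norm_le hK.le hq (by linarith) hx hu (by nlinarith)
  have : J / 2 ≤ C * τ :=
    calc J / 2 ≤ ‖f z - f x‖ := hzF
      _ ≤ ‖f z - f u‖ + ‖f u - f x‖ := norm_sub_le_norm_sub_add_norm_sub _ _ _
      _ ≤ 2 * K * τ + 16 * K / q * (2 * τ) :=
          add_le_add hzu (hfu.trans (mul_le_mul_of_nonneg_left hux (by positivity)))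
      _ = C * τ := by ring
  linarith

end Porosity

theorem stmt13_general {X Y : Type*} [NormedAddCommGroup X] [NormedSpace ℝ X] [CompleteSpace X]
    [TopologicalSpace.SeparableSpace X]
    [MeasurableSpace X] [BorelSpace X]
    [NormedAddCommGroup Y]
    [MeasurableSpace Y] [BorelSpace Y]
    (G : Set X) (hG : IsOpen G) (f : X → Y) (hmeas : Measurable f)
    (hline : ∀ a v : X, v ≠ 0 →
      ContinuousOn (fun t : ℝ => f (a + t • v)) {t : ℝ | a + t • v ∈ G}) :
    SigmaDirPorous {x ∈ G | ¬ LipschitzAtPt f x ∧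
      ∃ B ⊆ sphere (0:X) 1,
        ¬ IsMeagre {v : sphere (0:X) 1 | (v : X) ∈ B} ∧
        ∀ v ∈ B, ∃ K : ℝ, ∃ r > (0:ℝ), ∀ t : ℝ, 0 < t → t < r →
          ‖f (x + t • v) - f x‖ ≤ K * t} := by
  obtain ⟨s, hsc, hs⟩ := TopologicalSpace.exists_countable_dense (sphere (0:X) 1)
  have : Countable s := hsc.to_subtype
  refine sigmaDirPorous_of_subset_iUnion (fun i : ℕ × s × ℕ =>
    conePiece f G (i.1 + 1) (1 / (i.1 + 1)) (1 / (i.2.2 + 1)) i.2.1) ?_ ?_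
  · rintro x ⟨hxG, -, B, -, hB, hBbound⟩
    obtain ⟨n, w, hw, k, hx⟩ := exists_mem_conePiece hline hG hmeas hs hxG hB hBbound
    exact mem_iUnion.2 ⟨(n, ⟨w, hw⟩, k), hx⟩
  · rintro ⟨n, w, k⟩ x ⟨hx, -, hnl, -⟩
    refine dirPorousAt_of_forall_exists_hole (neg_ne_zero.2 (ne_zero_of_mem_unit_sphere w))
      (p := 1 / ((k : ℝ) + 1) / 8) (by positivity) fun ε hε => ?_
    exact exists_hole_of_mem_conePiece hline hG hmeas (by positivity) (by positivity)
      (by positivity) (div_le_one_of_le₀ (by simp) (by positivity)) hx hnl hε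

theorem stmt13 {X Y : Type*} [NormedAddCommGroup X] [NormedSpace ℝ X] [CompleteSpace X]
    [TopologicalSpace.SeparableSpace X]
    [MeasurableSpace X] [BorelSpace X]
    [NormedAddCommGroup Y] [NormedSpace ℝ Y] [CompleteSpace Y]
    [MeasurableSpace Y] [BorelSpace Y]
    (G : Set X) (hG : IsOpen G) (f : X → Y) (hmeas : Measurable f)
    (hline : ∀ a v : X, v ≠ 0 →
      ContinuousOn (fun t : ℝ => f (a + t • v)) {t : ℝ | a + t • v ∈ G}) :
    SigmaDirPorous {x ∈ G | ¬ LipschitzAtPt f x ∧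
      ∃ B ⊆ sphere (0:X) 1,
        ¬ IsMeagre {v : sphere (0:X) 1 | (v : X) ∈ B} ∧
        ∀ v ∈ B, ∃ K : ℝ, ∃ r > (0:ℝ), ∀ t : ℝ, 0 < t → t < r →
          ‖f (x + t • v) - f x‖ ≤ K * t} :=
  stmt13_general G hG f hmeas hline
end

section
/- Let X be a separable Banach space, Y a Banach space, G ⊂ X open, and f : G → Y a Borel measurable mapping whose restriction to every line meeting G is continuous. Then the set of points x ∈ G at which f is Gâteaux differentiable but not Hadamard differentiable is σ-directionally porous. -/
open Filter Metric Set Topology MeasureTheory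

/-!
Split the exceptional set according to whether `f` is pointwise Lipschitz at `x`.

If it is, failure of Hadamard differentiability in a direction `u` gives `t → 0⁺` and `z → u`
with `(f (x + t z) - f x) / t` far from `L u`, while `(f (x + t u) - f x) / t` is close to `L u`.
A point of the same Lipschitz class within `p t` of `x + t u` would, by its own Lipschitz bound,
force `f (x + t z)` and `f (x + t u)` to be close; so these balls are holes.

If it is not, Gâteaux differentiability still bounds the difference quotients in each direction
separately. The sets of directions sharing a bound are Borel, so by Baire's theorem one of them is
comeagre in an open set, and continuity along lines (approaching a direction along a line that
avoids the meagre exceptional set) turns this into a uniform bound on a ball `B(w, r)` of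
directions, with `w` from a countable dense set. If moreover `‖f y - f x‖` is large compared to
`‖y - x‖`, the ball around `x - s w`, `s ≈ ‖y - x‖ / r`, misses every point with the same cone
bound: from such a point both `x` and `y` are reached along directions of the cone.
-/

section Porosity

variable {X : Type*} [NormedAddCommGroup X] [NormedSpace ℝ X]

theorem dirPorousAt_of_frequently {S : Set X} {x v : X} {p : ℝ} (hx : x ∈ S) (hp : 0 < p)
    (h : ∃ᶠ t in 𝓝[>] (0 : ℝ), ball (x + t • v) (p * t) ∩ S = ∅) : DirPorousAt S x := by
  obtain ⟨t, ht, hholes⟩ := frequently_iff_seq_forall.1 (frequently_nhdsWithin_iff.1 h)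
  refine ⟨v, ?_, p, hp, t, fun n => (hholes n).2, ht, fun n => (hholes n).1⟩
  rintro rfl
  exact eq_empty_iff_forall_notMem.1 (hholes 0).1 x ⟨by simpa using mul_pos hp (hholes 0).2, hx⟩

theorem SigmaDirPorous.of_subset_iUnion {ι : Type*} [Countable ι] {A : Set X} (S : ι → Set X)
    (hsub : ∀ i, S i ⊆ A) (hcover : A ⊆ ⋃ i, S i) (hpor : ∀ i, ∀ x ∈ S i, DirPorousAt (S i) x) :
    SigmaDirPorous A := by
  have hA : A = ⋃ i, S i := hcover.antisymm (iUnion_subset hsub)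
  rcases isEmpty_or_nonempty ι with hι | hι
  · exact ⟨fun _ => ∅, by simp [hA], by simp⟩
  · obtain ⟨e, he⟩ := exists_surjective_nat ι
    exact ⟨S ∘ e, hA.trans (he.iUnion_comp S).symm, fun n => hpor (e n)⟩

end Porosity

theorem le_of_forall_rat_le {U : Set ℝ} (hU : IsOpen U) {g h : ℝ → ℝ}
    (hg : ∀ t ∈ U, ContinuousAt g t) (hh : Continuous h)
    (hq : ∀ q : ℚ, (q : ℝ) ∈ U → g q ≤ h q) {t : ℝ} (ht : t ∈ U) : g t ≤ h t :=
  ContinuousWithinAt.closure_le (Rat.denseRange_cast.open_subset_closure_inter hU ht)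
    (hg t ht).continuousWithinAt hh.continuousAt.continuousWithinAt
    (by rintro _ ⟨hqU, q, rfl⟩; exact hq q hqU)

theorem exists_tendsto_add_smul_of_eventually_residual {X : Type*} [AddCommGroup X] [Module ℝ X]
    [TopologicalSpace X] [IsTopologicalAddGroup X] [ContinuousSMul ℝ X] [BaireSpace X]
    {P : X → Prop} (hP : ∀ᶠ y in residual X, P y) (z : X) :
    ∃ e : X, ∃ s : ℕ → ℝ, Tendsto s atTop (𝓝 0) ∧ ∀ i, P (z + s i • e) := by
  have h : ∀ i : ℕ, ∀ᶠ e in residual X, P (z + (1 / (i + 1 : ℝ)) • e) := fun i =>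
    (tendsto_residual_of_isOpenMap (by fun_prop)
      ((isOpenMap_add_left z).comp (isOpenMap_smul₀ (by positivity)))).eventually hP
  obtain ⟨e, he⟩ := (dense_of_mem_residual (eventually_countable_forall.2 h)).nonempty
  exact ⟨e, _, tendsto_one_div_add_atTop_nhds_zero_nat, he⟩

theorem continuousAt_line {X Y : Type*} [NormedAddCommGroup X] [NormedSpace ℝ X]
    [TopologicalSpace Y] {f : X → Y} {G : Set X} (hG : IsOpen G)
    (hline : ∀ a v : X, v ≠ 0 →
      ContinuousOn (fun t : ℝ => f (a + t • v)) {t : ℝ | a + t • v ∈ G})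
    {a v : X} {t : ℝ} (ht : a + t • v ∈ G) : ContinuousAt (fun s : ℝ => f (a + s • v)) t := by
  rcases eq_or_ne v 0 with rfl | hv
  · simpa using continuousAt_const
  · exact (hline a v hv).continuousAt ((hG.preimage (by fun_prop)).mem_nhds ht)

theorem exists_nat_le_and_inv_le (K : ℝ) {δ : ℝ} (hδ : 0 < δ) :
    ∃ n : ℕ, K ≤ n + 1 ∧ (n + 1 : ℝ)⁻¹ ≤ δ := by
  obtain ⟨n, hn⟩ := exists_nat_gt (max K δ⁻¹)
  refine ⟨n, by linarith [le_max_left K δ⁻¹], inv_le_of_inv_le₀ hδ ?_⟩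
  linarith [le_max_right K δ⁻¹]

section BoundedDiffQuot

variable {X Y : Type*} [NormedAddCommGroup X] [NormedSpace ℝ X] [NormedAddCommGroup Y]

def BoundedDiffQuotOn (f : X → Y) (x : X) (V : Set X) (K δ : ℝ) : Prop :=
  ∀ z ∈ V, ∀ t : ℝ, |t| < δ → ‖f (x + t • z) - f x‖ ≤ K * |t|

theorem BoundedDiffQuotOn.mono {f : X → Y} {x : X} {V V' : Set X} {K K' δ δ' : ℝ}
    (h : BoundedDiffQuotOn f x V K δ) (hV : V' ⊆ V) (hK : K ≤ K') (hδ : δ' ≤ δ) :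
    BoundedDiffQuotOn f x V' K' δ' := fun z hz t ht =>
  (h z (hV hz) t (ht.trans_le hδ)).trans (by gcongr)

theorem GateauxDiffAt.exists_boundedDiffQuotOn_singleton [NormedSpace ℝ Y] {f : X → Y} {x : X}
    {L : X →L[ℝ] Y} (hL : GateauxDiffAt f x L) (v : X) :
    ∃ n : ℕ, BoundedDiffQuotOn f x {v} (n + 1) (n + 1 : ℝ)⁻¹ := by
  obtain ⟨δ, hδ, hball⟩ := Metric.eventually_nhds_iff_ball.1
    (eventually_nhdsWithin_iff.1 ((hL v).eventually (ball_mem_nhds (L v) one_pos)))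
  obtain ⟨n, hK, hnδ⟩ := exists_nat_le_and_inv_le (‖L v‖ + 1) hδ
  refine ⟨n, ?_⟩
  rintro z rfl t ht
  rcases eq_or_ne t 0 with rfl | ht0
  · simp
  have hq : ‖t⁻¹ • (f (x + t • z) - f x)‖ ≤ ‖L z‖ + 1 := by
    have := hball t (by simpa using ht.trans_le hnδ) ht0
    rw [dist_eq_norm] at this
    linarith [norm_le_norm_add_norm_sub' (t⁻¹ • (f (x + t • z) - f x)) (L z)]
  calc ‖f (x + t • z) - f x‖ = |t| * ‖t⁻¹ • (f (x + t • z) - f x)‖ := by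
        rw [norm_smul, Real.norm_eq_abs, ← mul_assoc, abs_inv, mul_inv_cancel₀ (abs_ne_zero.2 ht0),
          one_mul]
    _ ≤ (n + 1) * |t| := by rw [mul_comm]; gcongr; linarith

end BoundedDiffQuot

section Baire

variable {X Y : Type*} [NormedAddCommGroup X] [NormedSpace ℝ X] [NormedAddCommGroup Y]

theorem boundedDiffQuotOn_singleton_of_rat {f : X → Y} {x z : X} {K δ : ℝ}
    (hcont : ∀ t : ℝ, |t| < δ → ContinuousAt (fun s : ℝ => f (x + s • z)) t)
    (hq : ∀ q : ℚ, |(q : ℝ)| < δ → ‖f (x + (q : ℝ) • z) - f x‖ ≤ K * |(q : ℝ)|) :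
    BoundedDiffQuotOn f x {z} K δ := by
  intro w hw t ht
  rw [mem_singleton_iff.1 hw]
  exact le_of_forall_rat_le (g := fun t => ‖f (x + t • z) - f x‖) (h := fun t => K * |t|)
    (isOpen_lt continuous_abs continuous_const)
    (fun t ht => ((hcont t ht).sub continuousAt_const).norm) (by fun_prop) hq ht

theorem BoundedDiffQuotOn.of_tendsto_add_smul {f : X → Y} {x z e : X} {s : ℕ → ℝ} {K δ : ℝ}
    (hcont : ∀ t : ℝ, |t| < δ → ContinuousAt (fun σ : ℝ => f (x + t • z + σ • (t • e))) 0)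
    (hs : Tendsto s atTop (𝓝 0)) (h : ∀ᶠ i in atTop, BoundedDiffQuotOn f x {z + s i • e} K δ) :
    BoundedDiffQuotOn f x {z} K δ := by
  intro w hw t ht
  rw [mem_singleton_iff.1 hw]
  have hlim : Tendsto (fun i => f (x + t • (z + s i • e))) atTop (𝓝 (f (x + t • z))) := by
    simpa [Function.comp_def, smul_add, smul_comm t, add_assoc] using (hcont t ht).tendsto.comp hs
  exact le_of_tendsto (hlim.sub_const (f x)).norm (h.mono fun i hi => hi _ rfl t ht)

theorem BoundedDiffQuotOn.of_residualEq [BaireSpace X] {f : X → Y} {G : Set X}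
    (hline : ∀ (a v : X) (t : ℝ), a + t • v ∈ G → ContinuousAt (fun s : ℝ => f (a + s • v)) t)
    {x : X} {F V : Set X} {K δ : ℝ} (hV : IsOpen V)
    (hVG : ∀ z ∈ V, ∀ t : ℝ, |t| < δ → x + t • z ∈ G) (hF : ∀ y ∈ F, BoundedDiffQuotOn f x {y} K δ)
    (hFV : ∀ᶠ y in residual X, y ∈ F ↔ y ∈ V) : BoundedDiffQuotOn f x V K δ := by
  intro z hz
  obtain ⟨e, s, hs, hes⟩ := exists_tendsto_add_smul_of_eventually_residual hFV z
  have hnear : ∀ᶠ i in atTop, z + s i • e ∈ V := by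
    have : Tendsto (fun i => z + s i • e) atTop (𝓝 z) := by
      simpa using (hs.smul_const e).const_add z
    exact this.eventually (hV.mem_nhds hz)
  refine BoundedDiffQuotOn.of_tendsto_add_smul (fun t ht => ?_) hs
    (hnear.mono fun i hi => hF _ ((hes i).2 hi)) z rfl
  exact hline (x + t • z) (t • e) 0 (by simpa using hVG z hz t ht)

theorem exists_isOpen_boundedDiffQuotOn [CompleteSpace X] [MeasurableSpace X] [BorelSpace X]
    [MeasurableSpace Y] [BorelSpace Y] {f : X → Y} (hf : Measurable f) {G : Set X}
    (hG : IsOpen G)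
    (hline : ∀ (a v : X) (t : ℝ), a + t • v ∈ G → ContinuousAt (fun s : ℝ => f (a + s • v)) t)
    {x : X} (hx : x ∈ G) (hbdd : ∀ v, ∃ n : ℕ, BoundedDiffQuotOn f x {v} (n + 1) (n + 1 : ℝ)⁻¹) :
    ∃ U : Set X, IsOpen U ∧ U.Nonempty ∧
      ∃ n : ℕ, BoundedDiffQuotOn f x U (n + 1) (n + 1 : ℝ)⁻¹ := by
  obtain ⟨r, hr, hrG⟩ := Metric.isOpen_iff.1 hG x hx
  have hmemG : ∀ z ∈ ball (0 : X) r, ∀ t : ℝ, |t| ≤ 1 → x + t • z ∈ G := by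
    intro z hz t ht
    apply hrG
    rw [mem_ball_zero_iff] at hz
    rw [mem_ball, dist_self_add_left, norm_smul, Real.norm_eq_abs]
    nlinarith [norm_nonneg z, abs_nonneg t]
  have habs_le : ∀ n : ℕ, ∀ t : ℝ, |t| < (n + 1 : ℝ)⁻¹ → |t| ≤ 1 := fun n t ht =>
    ht.le.trans (inv_le_one_of_one_le₀ (by linarith [n.cast_nonneg (α := ℝ)]))
  -- Only rational times enter `F n`, so that it is Borel.
  set F : ℕ → Set X := fun n => ball 0 r ∩ ⋂ q : ℚ,
    {z | |(q : ℝ)| < (n + 1 : ℝ)⁻¹ → ‖f (x + (q : ℝ) • z) - f x‖ ≤ (n + 1) * |(q : ℝ)|}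
  have hFmeas : ∀ n, MeasurableSet (F n) := by
    refine fun n => measurableSet_ball.inter (MeasurableSet.iInter fun q => ?_)
    by_cases hq : |(q : ℝ)| < (n + 1 : ℝ)⁻¹
    · simpa only [hq, true_implies] using measurableSet_le (by fun_prop) measurable_const
    · simp [hq]
  have hFbdd : ∀ n, ∀ z ∈ F n, BoundedDiffQuotOn f x {z} (n + 1) (n + 1 : ℝ)⁻¹ := fun n z hz =>
    boundedDiffQuotOn_singleton_of_rat (fun t ht => hline x z t (hmemG z hz.1 t (habs_le n t ht)))
      (fun q hq => mem_iInter.1 hz.2 q hq)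
  have hcover : ball (0 : X) r ⊆ ⋃ n, F n := by
    intro z hz
    obtain ⟨n, hn⟩ := hbdd z
    exact mem_iUnion.2 ⟨n, hz, mem_iInter.2 fun q hq => hn z rfl q hq⟩
  obtain ⟨n, hn⟩ : ∃ n, ¬ IsMeagre (F n) := by
    by_contra! h
    exact not_isMeagre_of_isOpen isOpen_ball ⟨0, mem_ball_self hr⟩
      ((isMeagre_iUnion h).mono hcover)
  obtain ⟨U, hUo, hFU⟩ := (hFmeas n).residualEq_isOpen
  set V := U ∩ ball 0 r
  have hFV : ∀ᶠ y in residual X, y ∈ F n ↔ y ∈ V := by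
    have := hFU.inter (EventuallyEq.refl _ (ball (0 : X) r))
    rwa [inter_eq_left.2 inter_subset_left, eventuallyEq_set] at this
  refine ⟨V, hUo.inter isOpen_ball, ?_, n, BoundedDiffQuotOn.of_residualEq hline
    (hUo.inter isOpen_ball) (fun z hz t ht => hmemG z hz.2 t (habs_le n t ht)) (hFbdd n) hFV⟩
  by_contra hV
  apply hn
  filter_upwards [hFV] with y hy
  simpa [not_nonempty_iff_eq_empty.1 hV] using hy

theorem BoundedDiffQuotOn.exists_ball_denseSeq [TopologicalSpace.SeparableSpace X] {f : X → Y}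
    {x : X} {U : Set X} {n : ℕ} (h : BoundedDiffQuotOn f x U (n + 1) (n + 1 : ℝ)⁻¹)
    (hU : IsOpen U) (hne : U.Nonempty) :
    ∃ m k : ℕ, BoundedDiffQuotOn f x (ball (TopologicalSpace.denseSeq X k) (m + 1 : ℝ)⁻¹)
      (m + 1) (m + 1 : ℝ)⁻¹ := by
  obtain ⟨k, hk⟩ := (TopologicalSpace.denseRange_denseSeq X).exists_mem_open hU hne
  obtain ⟨ρ, hρ, hρU⟩ := Metric.isOpen_iff.1 hU _ hk
  obtain ⟨m, hnm, hmρ⟩ := exists_nat_le_and_inv_le (n + 1 : ℝ) hρ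
  exact ⟨m, k, h.mono ((ball_subset_ball hmρ).trans hρU) hnm (inv_anti₀ (by positivity) hnm)⟩

end Baire

theorem frequently_lt_of_not_lipschitzAtPt {X Y : Type*} [NormedAddCommGroup X]
    [NormedAddCommGroup Y] {f : X → Y} {x : X} (h : ¬ LipschitzAtPt f x) {K : ℝ}
    (hK : 0 < K) : ∃ᶠ y in 𝓝 x, K * ‖y - x‖ < ‖f y - f x‖ := by
  intro hev
  obtain ⟨δ, hδ, hball⟩ := Metric.eventually_nhds_iff_ball.1 hev
  exact h ⟨K, hK, δ, hδ, fun y hy => not_lt.1 (hball y hy)⟩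

section Holes

variable {X Y : Type*} [NormedAddCommGroup X] [NormedSpace ℝ X] [NormedAddCommGroup Y]

theorem BoundedDiffQuotOn.norm_sub_le {f : X → Y} {x w y : X} {q K δ s : ℝ}
    (h : BoundedDiffQuotOn f x (ball w q) K δ) (hs : 0 < s) (hsδ : s < δ)
    (hy : dist (s⁻¹ • (y - x)) w < q) : ‖f y - f x‖ ≤ K * s := by
  have := h _ hy s (by rwa [abs_of_pos hs])
  rwa [smul_inv_smul₀ hs.ne', add_sub_cancel, abs_of_pos hs] at this

theorem ball_inter_eq_empty_of_boundedDiffQuotOn {f : X → Y} {S : Set X} {w : X} {q K δ : ℝ}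
    (hS : ∀ x' ∈ S, BoundedDiffQuotOn f x' (ball w q) K δ) (hq : 0 < q) {x y : X}
    (hyx : 0 < ‖y - x‖) (hy : 4 * K / q * ‖y - x‖ < ‖f y - f x‖) (hδ : 2 * ‖y - x‖ / q < δ) :
    ball (x + (2 * ‖y - x‖ / q) • -w) (q / 4 * (2 * ‖y - x‖ / q)) ∩ S = ∅ := by
  set s := 2 * ‖y - x‖ / q
  have hs : 0 < s := by positivity
  refine eq_empty_iff_forall_notMem.2 fun x' ⟨hx'b, hx'S⟩ => ?_
  rw [mem_ball, dist_eq_norm] at hx'b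
  have hx : dist (s⁻¹ • (x - x')) w < q / 4 := by
    have heq : s⁻¹ • (x - x') - w = -(s⁻¹ • (x' - (x + s • -w))) := by
      simp only [smul_sub, smul_add, inv_smul_smul₀ hs.ne']
      abel
    rw [dist_eq_norm, heq, norm_neg, norm_smul, Real.norm_eq_abs, abs_inv, abs_of_pos hs]
    calc s⁻¹ * ‖x' - (x + s • -w)‖ < s⁻¹ * (q / 4 * s) := by gcongr
      _ = q / 4 := by field_simp
  have hy' : dist (s⁻¹ • (y - x')) w < q := by
    have hyx' : ‖s⁻¹ • (y - x)‖ = q / 2 := by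
      rw [norm_smul, Real.norm_eq_abs, abs_inv, abs_of_pos hs]
      simp only [s]
      field_simp
    calc dist (s⁻¹ • (y - x')) w = ‖s⁻¹ • (y - x) + (s⁻¹ • (x - x') - w)‖ := by
          rw [dist_eq_norm, smul_sub, smul_sub, smul_sub]
          abel_nf
      _ ≤ ‖s⁻¹ • (y - x)‖ + dist (s⁻¹ • (x - x')) w := by
          rw [dist_eq_norm]; exact norm_add_le _ _
      _ < q := by linarith
  have h₁ := (hS x' hx'S).norm_sub_le hs hδ (hx.trans (by linarith))
  have h₂ := (hS x' hx'S).norm_sub_le hs hδ hy'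
  have : ‖f y - f x‖ ≤ 4 * K / q * ‖y - x‖ :=
    calc ‖f y - f x‖ ≤ ‖f y - f x'‖ + ‖f x - f x'‖ := by
          simpa only [dist_eq_norm] using dist_triangle_right (f y) (f x) (f x')
      _ ≤ K * s + K * s := add_le_add h₂ h₁
      _ = 4 * K / q * ‖y - x‖ := by ring
  linarith

theorem dirPorousAt_of_boundedDiffQuotOn {f : X → Y} {S : Set X} {w : X} {q K δ : ℝ}
    (hq : 0 < q) (hK : 0 < K) (hδ : 0 < δ) (hS : ∀ x' ∈ S, BoundedDiffQuotOn f x' (ball w q) K δ)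
    {x : X} (hx : x ∈ S) (hlip : ¬ LipschitzAtPt f x) : DirPorousAt S x := by
  have hs : Tendsto (fun y => 2 * ‖y - x‖ / q) (𝓝 x) (𝓝 0) :=
    Continuous.tendsto' (by fun_prop) x 0 (by simp)
  refine dirPorousAt_of_frequently (v := -w) hx (by positivity : 0 < q / 4) ?_
  refine frequently_nhdsWithin_iff.2 (hs.frequently ?_)
  refine ((frequently_lt_of_not_lipschitzAtPt hlip (by positivity : 0 < 4 * K / q)).and_eventually
    (hs.eventually (eventually_lt_nhds hδ))).mono fun y ⟨hy, hyδ⟩ => ?_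
  have hyx : y ≠ x := by rintro rfl; simp at hy
  have hyx' : 0 < ‖y - x‖ := norm_pos_iff.2 (sub_ne_zero.2 hyx)
  exact ⟨ball_inter_eq_empty_of_boundedDiffQuotOn hS hq hyx' hy hyδ, mem_Ioi.2 (by positivity)⟩

variable [NormedSpace ℝ Y]

theorem ball_inter_eq_empty_of_lipschitzAt {f : X → Y} {S : Set X} {K δ : ℝ} (hK : 0 < K)
    (hS : ∀ x' ∈ S, ∀ y ∈ ball x' δ, ‖f y - f x'‖ ≤ K * ‖y - x'‖) {x u z : X} {y₀ : Y}
    {ε p t : ℝ} (hp : 0 < p) (hKp : K * p = ε / 8) (ht : 0 < t) (htδ : 2 * p * t < δ)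
    (hz : dist z u < p) (hu : ‖t⁻¹ • (f (x + t • u) - f x) - y₀‖ < ε / 2)
    (hz' : ε ≤ ‖t⁻¹ • (f (x + t • z) - f x) - y₀‖) :
    ball (x + t • u) (p * t) ∩ S = ∅ := by
  refine eq_empty_iff_forall_notMem.2 fun x' ⟨hx'b, hx'S⟩ => ?_
  rw [mem_ball'] at hx'b
  have hzu : dist (x + t • z) (x + t • u) ≤ p * t := by
    rw [dist_add_left, dist_smul₀, Real.norm_eq_abs, abs_of_pos ht, mul_comm]
    gcongr
  have hz'b : dist (x + t • z) x' < 2 * p * t := by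
    linarith [dist_triangle (x + t • z) (x + t • u) x']
  have hlip : ∀ y, dist y x' < δ → ‖f y - f x'‖ ≤ K * dist y x' := fun y hy => by
    rw [dist_eq_norm]; exact hS x' hx'S y (mem_ball.2 hy)
  have hdiff : ‖f (x + t • z) - f (x + t • u)‖ ≤ 3 * K * p * t := by
    calc ‖f (x + t • z) - f (x + t • u)‖
        ≤ ‖f (x + t • z) - f x'‖ + ‖f (x + t • u) - f x'‖ := by
          simpa only [dist_eq_norm] using dist_triangle_right (f (x + t • z)) (f (x + t • u)) (f x')
      _ ≤ K * (2 * p * t) + K * (p * t) := by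
          gcongr
          · exact (hlip _ (hz'b.trans htδ)).trans (by gcongr)
          · exact (hlip _ (by nlinarith)).trans (by gcongr)
      _ = 3 * K * p * t := by ring
  have hsplit : t⁻¹ • (f (x + t • z) - f x) - y₀ =
      (t⁻¹ • (f (x + t • u) - f x) - y₀) + t⁻¹ • (f (x + t • z) - f (x + t • u)) := by
    rw [smul_sub, smul_sub, smul_sub]; abel
  have : ‖t⁻¹ • (f (x + t • z) - f (x + t • u))‖ ≤ 3 * (ε / 8) := by
    rw [norm_smul, Real.norm_eq_abs, abs_inv, abs_of_pos ht, inv_mul_le_iff₀ ht]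
    linarith [show 3 * K * p * t = t * (3 * (ε / 8)) by rw [← hKp]; ring]
  have := hsplit ▸ norm_add_le _ _
  linarith [mul_pos hK hp]

end Holes

section Hadamard

variable {X Y : Type*} [NormedAddCommGroup X] [NormedSpace ℝ X]
  [NormedAddCommGroup Y] [NormedSpace ℝ Y]

theorem HadamardDerivAt.of_hadamardPlusDerivAt {f : X → Y} {x v : X} {y : Y}
    (h₁ : HadamardPlusDerivAt f x v y) (h₂ : HadamardPlusDerivAt f x (-v) (-y)) :
    HadamardDerivAt f x v y := by
  unfold HadamardDerivAt
  rw [← nhdsLT_sup_nhdsGT, sup_prod, tendsto_sup]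
  refine ⟨?_, h₁⟩
  -- On the left half of `𝓝[≠] 0`, substitute `(t, z) ↦ (-t, -z)`.
  have hneg : Tendsto (fun p : ℝ × X => (-p.1, -p.2)) (𝓝[<] 0 ×ˢ 𝓝 v) (𝓝[>] 0 ×ˢ 𝓝 (-v)) :=
    Tendsto.prodMap (by simpa using tendsto_neg_nhdsLT (a := (0 : ℝ))) (tendsto_neg v)
  simpa [Function.comp_def, neg_smul_neg, inv_neg] using (h₂.comp hneg).neg

theorem exists_frequently_ball_inter_eq_empty_of_not_hadamardPlusDerivAt {f : X → Y} {S : Set X}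
    {K δ : ℝ} (hK : 0 < K) (hδ : 0 < δ)
    (hS : ∀ x' ∈ S, ∀ y ∈ ball x' δ, ‖f y - f x'‖ ≤ K * ‖y - x'‖)
    {x u : X} {y₀ : Y} (hu : Tendsto (fun t : ℝ => t⁻¹ • (f (x + t • u) - f x)) (𝓝[>] 0) (𝓝 y₀))
    (hnot : ¬ HadamardPlusDerivAt f x u y₀) :
    ∃ p > 0, ∃ᶠ t in 𝓝[>] (0 : ℝ), ball (x + t • u) (p * t) ∩ S = ∅ := by
  obtain ⟨ε, hε, hfreq⟩ : ∃ ε > 0, ∃ᶠ q : ℝ × X in 𝓝[>] 0 ×ˢ 𝓝 u,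
      ε ≤ ‖q.1⁻¹ • (f (x + q.1 • q.2) - f x) - y₀‖ := by
    rw [HadamardPlusDerivAt, Metric.tendsto_nhds] at hnot
    push Not at hnot
    simpa only [Filter.not_eventually, not_lt, dist_eq_norm] using hnot
  set p := ε / (8 * K)
  have hp : 0 < p := by positivity
  have hKp : K * p = ε / 8 := by simp only [p]; field_simp
  have ht : ∀ᶠ t in 𝓝[>] (0 : ℝ),
      0 < t ∧ 2 * p * t < δ ∧ ‖t⁻¹ • (f (x + t • u) - f x) - y₀‖ < ε / 2 := by
    refine Eventually.and self_mem_nhdsWithin (Eventually.and ?_ ?_)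
    · exact eventually_nhdsWithin_of_eventually_nhds
        ((Continuous.tendsto' (by fun_prop) 0 0 (by simp)).eventually (eventually_lt_nhds hδ))
    · simpa only [dist_eq_norm] using Metric.tendsto_nhds.1 hu (ε / 2) (by positivity)
  refine ⟨p, hp, tendsto_fst.frequently ((hfreq.and_eventually
    (ht.prod_mk (ball_mem_nhds u hp))).mono fun q ⟨hq, hqt, hqz⟩ => ?_)⟩
  exact ball_inter_eq_empty_of_lipschitzAt hK hS hp hKp hqt.1 hqt.2.1 hqz hqt.2.2 hq

theorem dirPorousAt_of_not_hadamardDiffAt {f : X → Y} {S : Set X} {K δ : ℝ} (hK : 0 < K)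
    (hδ : 0 < δ) (hS : ∀ x' ∈ S, ∀ y ∈ ball x' δ, ‖f y - f x'‖ ≤ K * ‖y - x'‖) {x : X}
    (hx : x ∈ S) {L : X →L[ℝ] Y} (hL : GateauxDiffAt f x L) (hnot : ¬ HadamardDiffAt f x L) :
    DirPorousAt S x := by
  obtain ⟨u, hu⟩ : ∃ u, ¬ HadamardPlusDerivAt f x u (L u) := by
    by_contra! h
    obtain ⟨v, hv⟩ := not_forall.1 hnot
    exact hv (HadamardDerivAt.of_hadamardPlusDerivAt (h v) (by simpa using h (-v)))
  obtain ⟨p, hp, hholes⟩ :=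
    exists_frequently_ball_inter_eq_empty_of_not_hadamardPlusDerivAt hK hδ hS
    ((hL u).mono_left (nhdsWithin_mono _ fun t ht => ne_of_gt ht)) hu
  exact dirPorousAt_of_frequently hx hp hholes

end Hadamard

theorem LipschitzAtPt.exists_nat {X Y : Type*} [NormedAddCommGroup X] [NormedAddCommGroup Y]
    {f : X → Y} {x : X} (h : LipschitzAtPt f x) :
    ∃ n : ℕ, ∀ y ∈ ball x (n + 1 : ℝ)⁻¹, ‖f y - f x‖ ≤ (n + 1) * ‖y - x‖ := by
  obtain ⟨K, -, δ, hδ, hball⟩ := h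
  obtain ⟨n, hK, hnδ⟩ := exists_nat_le_and_inv_le K hδ
  exact ⟨n, fun y hy => (hball y (ball_subset_ball hnδ hy)).trans (by gcongr)⟩

theorem stmt15_general {X Y : Type*} [NormedAddCommGroup X] [NormedSpace ℝ X] [CompleteSpace X]
    [TopologicalSpace.SeparableSpace X]
    [MeasurableSpace X] [BorelSpace X]
    [NormedAddCommGroup Y] [NormedSpace ℝ Y]
    [MeasurableSpace Y] [BorelSpace Y]
    (G : Set X) (hG : IsOpen G) (f : X → Y) (hmeas : Measurable f)
    (hline : ∀ a v : X, v ≠ 0 →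
      ContinuousOn (fun t : ℝ => f (a + t • v)) {t : ℝ | a + t • v ∈ G}) :
    SigmaDirPorous {x ∈ G | (∃ L : X →L[ℝ] Y, GateauxDiffAt f x L) ∧
      ¬ (∃ L : X →L[ℝ] Y, HadamardDiffAt f x L)} := by
  set A := {x ∈ G | (∃ L : X →L[ℝ] Y, GateauxDiffAt f x L) ∧
    ¬ (∃ L : X →L[ℝ] Y, HadamardDiffAt f x L)}
  let S : ℕ ⊕ ℕ × ℕ → Set X := Sum.elim
    (fun n => {x ∈ A | ∀ y ∈ ball x (n + 1 : ℝ)⁻¹, ‖f y - f x‖ ≤ (n + 1) * ‖y - x‖})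
    (fun nk => {x ∈ A | ¬ LipschitzAtPt f x ∧ BoundedDiffQuotOn f x
      (ball (TopologicalSpace.denseSeq X nk.2) (nk.1 + 1 : ℝ)⁻¹) (nk.1 + 1) (nk.1 + 1 : ℝ)⁻¹})
  refine SigmaDirPorous.of_subset_iUnion S (by rintro (n | nk) x hx <;> exact hx.1) ?_ ?_
  · intro x hx
    by_cases hlip : LipschitzAtPt f x
    · obtain ⟨n, hn⟩ := hlip.exists_nat
      exact mem_iUnion.2 ⟨.inl n, hx, hn⟩
    · obtain ⟨L, hL⟩ := hx.2.1
      obtain ⟨U, hU, hUne, n, hn⟩ := exists_isOpen_boundedDiffQuotOn hmeas hG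
        (fun a v t ht => continuousAt_line hG hline ht) hx.1 hL.exists_boundedDiffQuotOn_singleton
      obtain ⟨m, k, hmk⟩ := hn.exists_ball_denseSeq hU hUne
      exact mem_iUnion.2 ⟨.inr (m, k), hx, hlip, hmk⟩
  · rintro (n | ⟨n, k⟩) x hx
    · obtain ⟨L, hL⟩ := hx.1.2.1
      exact dirPorousAt_of_not_hadamardDiffAt (by positivity) (by positivity)
        (fun x' hx' => hx'.2) hx hL fun h => hx.1.2.2 ⟨L, h⟩
    · exact dirPorousAt_of_boundedDiffQuotOn (by positivity) (by positivity) (by positivity)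
        (fun x' hx' => hx'.2.2) hx hx.2.1

theorem stmt15 {X Y : Type*} [NormedAddCommGroup X] [NormedSpace ℝ X] [CompleteSpace X]
    [TopologicalSpace.SeparableSpace X]
    [MeasurableSpace X] [BorelSpace X]
    [NormedAddCommGroup Y] [NormedSpace ℝ Y] [CompleteSpace Y]
    [MeasurableSpace Y] [BorelSpace Y]
    (G : Set X) (hG : IsOpen G) (f : X → Y) (hmeas : Measurable f)
    (hline : ∀ a v : X, v ≠ 0 →
      ContinuousOn (fun t : ℝ => f (a + t • v)) {t : ℝ | a + t • v ∈ G}) :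
    SigmaDirPorous {x ∈ G | (∃ L : X →L[ℝ] Y, GateauxDiffAt f x L) ∧
      ¬ (∃ L : X →L[ℝ] Y, HadamardDiffAt f x L)} :=
  stmt15_general G hG f hmeas hline
end
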